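/- Let A be an n × m' structured pattern with n ≤ m'. Then: (i) the generic rank of A equals n if and only if A is not of form (n); (ii) for 1 ≤ t < n, the generic rank of A equals t if and only if A is of form (t+1) but not of form (t). -/

import Mathlib

/-- The generic rank of a structured pattern: the maximal rank achieved by a realization,
i.e. by a real matrix vanishing at every fixed-zero position. -/
noncomputable def gRank {n : ℕ} {α : Type} [Fintype α] (P : Fin n → α → Prop) : ℕ :=
  sSup {t : ℕ | ∃ M : Matrix (Fin n) α ℝ, (∀ k c, ¬ P k c → M k c = 0) ∧ M.rank = t}

/-- An `n × m'` structured pattern is of form `(t)` if for some `k` with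
`m' − t < k ≤ m'` it contains an all-fixed-zero submatrix of size
`(n + m' − t − k + 1) × k`. -/
def FormT {n m' : ℕ} (P : Fin n → Fin m' → Prop) (t : ℕ) : Prop :=
  ∃ k : ℕ, m' - t < k ∧ k ≤ m' ∧
    ∃ (R : Finset (Fin n)) (C : Finset (Fin m')),
      R.card = n + m' - t - k + 1 ∧ C.card = k ∧
      ∀ i ∈ R, ∀ j ∈ C, ¬ P i j

/-!
If a realization vanishes on an `r × k` zero block, its rank is at most `(n - r) + (m' - k)`;
for a block witnessing form `(t)` this is `< t`. Conversely, if there is no such block, the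
bipartite graph of free positions satisfies Hall's condition with deficiency `n - t`, so it
has a matching of size `t`, and the `0/1` realization supported on that matching has
rank `≥ t`. Hence for `t ≤ n`, `A` is of form `(t)` iff its g-rank is `< t`,
from which both parts follow.
-/

open Finset Matrix

namespace Matrix

theorem rank_add_le {m n K : Type*} [Fintype n] [Field K] (A B : Matrix m n K) :
    (A + B).rank ≤ A.rank + B.rank := by
  rw [rank, rank, rank, mulVecLin_add]
  exact (Submodule.finrank_mono (LinearMap.range_add_le _ _)).trans
    (Submodule.finrank_add_le_finrank_add_finrank _ _)

theorem rank_le_card_compl_add_card_compl_of_forall_eq_zero {m n K : Type*} [Fintype m]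
    [Fintype n] [DecidableEq m] [DecidableEq n] [Field K]
    (M : Matrix m n K) (R : Finset m) (C : Finset n) (hM : ∀ i ∈ R, ∀ j ∈ C, M i j = 0) :
    M.rank ≤ #Rᶜ + #Cᶜ := by
  let A : Matrix m n K := of fun i j => if j ∈ C then M i j else 0
  let B : Matrix m n K := of fun i j => if j ∈ C then 0 else M i j
  have hA : A.rank ≤ #Rᶜ := by
    refine rank_le_card_of_support_subset A Rᶜ fun i hi => ?_
    rw [mem_coe, mem_compl]
    intro hiR
    refine hi (funext fun j => ?_)
    by_cases hj : j ∈ C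
    · simp [A, hj, hM i hiR j hj]
    · simp [A, hj]
  have hB : B.rank ≤ #Cᶜ := by
    rw [← rank_transpose]
    refine rank_le_card_of_support_subset Bᵀ Cᶜ fun j hj => ?_
    rw [mem_coe, mem_compl]
    intro hjC
    exact hj (funext fun i => by simp [B, hjC])
  have hAB : M = A + B := by
    ext i j
    by_cases hj : j ∈ C <;> simp [A, B, hj]
  rw [hAB]
  exact (rank_add_le A B).trans (add_le_add hA hB)

end Matrix

/-- Hall's marriage theorem with deficiency `d`. -/
theorem Finset.exists_injective_of_card_le_card_biUnion_add {ι α : Type*} [Fintype ι]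
    [DecidableEq α] (N : ι → Finset α) (d : ℕ) (h : ∀ s : Finset ι, #s ≤ #(s.biUnion N) + d) :
    ∃ (S : Finset ι) (g : S → α),
      Fintype.card ι ≤ #S + d ∧ Function.Injective g ∧ ∀ i : S, g i ∈ N i := by
  classical
  -- `d` extra vertices adjacent to every `i` make Hall's condition hold.
  let T : ι → Finset (α ⊕ Fin d) := fun i => (N i).disjSum univ
  have hall : ∀ s : Finset ι, #s ≤ #(s.biUnion T) := by
    intro s
    rcases s.eq_empty_or_nonempty with rfl | ⟨i₀, hi₀⟩
    · simp
    have hT : s.biUnion T = (s.biUnion N).disjSum univ := by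
      ext (a | b) <;> simp [T]
      exact ⟨i₀, hi₀⟩
    simpa [hT] using h s
  obtain ⟨f, hf, hfT⟩ := (all_card_le_biUnion_card_iff_exists_injective T).mp hall
  refine ⟨univ.filter fun i => (f i).isLeft, fun i => (f i).getLeft (mem_filter.mp i.2).2,
    ?_, ?_, fun i => ?_⟩
  · have hright :
        #(univ.filter fun i => ¬ (f i).isLeft) ≤ #(univ.map (.inr : Fin d ↪ α ⊕ Fin d)) :=
      card_le_card_of_injOn f (fun i hi => by
        rcases hfi : f i with a | b
        · simp_all
        · simp) hf.injOn
    have hsplit := card_filter_add_card_filter_not (s := (univ : Finset ι)) fun i => (f i).isLeft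
    rw [card_map, card_univ, Fintype.card_fin] at hright
    rw [card_univ] at hsplit
    omega
  · intro a b hab
    apply Subtype.ext (hf _)
    rw [← Sum.inl_getLeft (f a) (mem_filter.mp a.2).2,
      ← Sum.inl_getLeft (f b) (mem_filter.mp b.2).2]
    exact congrArg Sum.inl hab
  · have hi := hfT i
    rwa [← Sum.inl_getLeft (f i) (mem_filter.mp i.2).2, inl_mem_disjSum] at hi

def IsRealization {n : ℕ} {α : Type} (P : Fin n → α → Prop) (M : Matrix (Fin n) α ℝ) : Prop :=
  ∀ k c, ¬ P k c → M k c = 0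

def realizationRanks {n : ℕ} {α : Type} [Fintype α] (P : Fin n → α → Prop) : Set ℕ :=
  {t | ∃ M : Matrix (Fin n) α ℝ, IsRealization P M ∧ M.rank = t}

section GenericRank

variable {n : ℕ} {α : Type} [Fintype α] {P : Fin n → α → Prop}

theorem bddAbove_realizationRanks : BddAbove (realizationRanks P) :=
  ⟨n, by rintro _ ⟨M, -, rfl⟩; simpa using M.rank_le_card_height⟩

theorem rank_le_gRank {M : Matrix (Fin n) α ℝ} (hM : IsRealization P M) : M.rank ≤ gRank P :=
  le_csSup (s := realizationRanks P) bddAbove_realizationRanks ⟨M, hM, rfl⟩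

theorem exists_isRealization_rank_eq_gRank :
    ∃ M : Matrix (Fin n) α ℝ, IsRealization P M ∧ M.rank = gRank P :=
  Nat.sSup_mem (s := realizationRanks P) ⟨0, 0, fun _ _ _ => rfl, Matrix.rank_zero⟩
    bddAbove_realizationRanks

theorem gRank_le_height : gRank P ≤ n := by
  obtain ⟨M, -, hM⟩ := exists_isRealization_rank_eq_gRank (P := P)
  simpa [hM] using M.rank_le_card_height

theorem gRank_lt_iff {t : ℕ} :
    gRank P < t ↔ ∀ M : Matrix (Fin n) α ℝ, IsRealization P M → M.rank < t := by
  refine ⟨fun h M hM => (rank_le_gRank hM).trans_lt h, fun h => ?_⟩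
  obtain ⟨M, hM, hrank⟩ := exists_isRealization_rank_eq_gRank (P := P)
  exact hrank ▸ h M hM

end GenericRank

section FormT

variable {n m' : ℕ} {P : Fin n → Fin m' → Prop} {t : ℕ}

theorem FormT.rank_lt (hf : FormT P t) {M : Matrix (Fin n) (Fin m') ℝ}
    (hM : IsRealization P M) : M.rank < t := by
  obtain ⟨k, -, hkm, R, C, hR, hC, hzero⟩ := hf
  have hblock := M.rank_le_card_compl_add_card_compl_of_forall_eq_zero R C
    fun i hi j hj => hM i j (hzero i hi j hj)
  have hRn : #R ≤ n := by simpa using card_le_univ R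
  rw [card_compl, card_compl, hR, hC, Fintype.card_fin, Fintype.card_fin] at hblock
  omega

open Classical in
theorem card_le_card_biUnion_add_of_not_formT (hnm : n ≤ m') (htn : t ≤ n) (hf : ¬ FormT P t)
    (s : Finset (Fin n)) : #s ≤ #(s.biUnion fun i => {j | P i j}) + (n - t) := by
  set B := s.biUnion fun i => {j | P i j}
  by_contra! hs
  have hsn : #s ≤ n := by simpa using card_le_univ s
  have hBm : #B ≤ m' := by simpa using card_le_univ B
  -- The rows of `s` vanish outside the columns `B`, giving a block witnessing form `(t)`.
  obtain ⟨R, hRs, hR⟩ := exists_subset_card_eq (s := s) (n := n - t + #B + 1) (by omega)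
  refine hf ⟨m' - #B, by omega, by omega, R, Bᶜ, by omega, by simp [card_compl], ?_⟩
  intro i hi j hj hP
  exact mem_compl.mp hj (mem_biUnion.mpr ⟨i, hRs hi, by simpa using hP⟩)

theorem exists_isRealization_le_rank_of_not_formT (hnm : n ≤ m') (htn : t ≤ n)
    (hf : ¬ FormT P t) : ∃ M : Matrix (Fin n) (Fin m') ℝ, IsRealization P M ∧ t ≤ M.rank := by
  classical
  obtain ⟨S, g, hcard, hg, hgP⟩ := exists_injective_of_card_le_card_biUnion_add _ (n - t)
    (card_le_card_biUnion_add_of_not_formT hnm htn hf)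
  let M : Matrix (Fin n) (Fin m') ℝ :=
    of fun i j => if h : i ∈ S then if g ⟨i, h⟩ = j then 1 else 0 else 0
  have hMg : M.submatrix (Subtype.val : S → Fin n) g = 1 := by
    ext a b
    simp [M, one_apply, hg.eq_iff]
  refine ⟨M, fun i j hP => ?_, ?_⟩
  · by_cases hi : i ∈ S
    · have hgj : g ⟨i, hi⟩ ≠ j := fun hgj => hP (by simpa [hgj] using hgP ⟨i, hi⟩)
      simp [M, hi, hgj]
    · simp [M, hi]
  · calc t ≤ #S := by simp only [Fintype.card_fin] at hcard; omega
      _ = (M.submatrix (Subtype.val : S → Fin n) g).rank := by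
        rw [hMg, rank_one, Fintype.card_coe]
      _ ≤ M.rank := rank_submatrix_le M _ _

theorem formT_iff_gRank_lt (hnm : n ≤ m') (htn : t ≤ n) : FormT P t ↔ gRank P < t := by
  rw [gRank_lt_iff]
  refine ⟨fun hf M hM => hf.rank_lt hM, fun h => by_contra fun hf => ?_⟩
  obtain ⟨M, hM, hle⟩ := exists_isRealization_le_rank_of_not_formT hnm htn hf
  exact (h M hM).not_ge hle

end FormT

/-- For an `n × m'` structured pattern `A` with `n ≤ m'`:
(i) its generic rank equals `n` iff `A` is not of form `(n)`;
(ii) for `1 ≤ t < n`, its generic rank equals `t` iff `A` is of form `(t+1)` but not of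
form `(t)`. -/
theorem gRank_iff_formT {n m' : ℕ} (P : Fin n → Fin m' → Prop) (hnm : n ≤ m') :
    (gRank P = n ↔ ¬ FormT P n) ∧
      ∀ t : ℕ, 1 ≤ t → t < n → (gRank P = t ↔ FormT P (t + 1) ∧ ¬ FormT P t) := by
  have hle : gRank P ≤ n := gRank_le_height
  refine ⟨?_, fun t _ htn => ?_⟩
  · rw [formT_iff_gRank_lt hnm le_rfl]
    omega
  · rw [formT_iff_gRank_lt hnm htn, formT_iff_gRank_lt hnm htn.le]
    omega
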